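/- Let W3 be the 3-wheel: the directed 3-cycle on vertices u1, u2, u3 together with a centre vertex c and arcs cu1, cu2, cu3. A digraph D contains a W3-subdivision with centre v if and only if there exists a strong component Γ of D - v and a set X of three distinct vertices of Γ such that there are three independent (v, X)-dipaths in D - (V(Γ) \ X) and Γ contains an X-tripod. -/

import Mathlib

open List

variable {V : Type*}

/-- The interior (internal vertices) of a path given as a list of vertices. -/
def interiorL (l : List V) : List V := l.tail.dropLast

/-- `l` is a directed path (dipath) in the digraph `D`. -/
def IsDipath (D : V → V → Prop) (l : List V) : Prop :=
  l ≠ [] ∧ l.Chain' D ∧ l.Nodup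

/-- `l` is a dipath from `x` to `y` in `D`. -/
def DipathFromTo (D : V → V → Prop) (l : List V) (x y : V) : Prop :=
  IsDipath D l ∧ l.head? = some x ∧ l.getLast? = some y

/-- `l` is a directed cycle in `D` (length at least 2, digraphs being strict). -/
def IsDicycle (D : V → V → Prop) (l : List V) : Prop :=
  2 ≤ l.length ∧ l.Nodup ∧ l.Chain' D ∧ ∃ a ∈ l.getLast?, ∃ b ∈ l.head?, D a b

/-- The restriction (induced subdigraph) of `D` to the vertex set `A`. -/
def restrict (D : V → V → Prop) (A : Set V) : V → V → Prop :=
  fun u v => D u v ∧ u ∈ A ∧ v ∈ A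

/-- Reachability by a dipath inside the vertex set `A`. -/
def ReachIn (D : V → V → Prop) (A : Set V) : V → V → Prop :=
  Relation.ReflTransGen (restrict D A)

/-- Reachability by a dipath. -/
def Reach (D : V → V → Prop) : V → V → Prop := Relation.ReflTransGen D

/-- `x` appears strictly before `y` along the list `l`. -/
def Before (l : List V) (x y : V) : Prop :=
  ∃ i j : ℕ, i < j ∧ l[i]? = some x ∧ l[j]? = some y

/-- `x` and `y` are consecutive (in this order) in `l`. -/
def ConsecIn (l : List V) (x y : V) : Prop :=
  ∃ i : ℕ, l[i]? = some x ∧ l[i + 1]? = some y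

/-- `D` contains a subdivision of `F`, realized by the branch-vertex map `branch` and,
for every arc `uv` of `F`, the dipath `P u v` from `branch u` to `branch v`;
the paths have length at least one and are internally disjoint from each other
and from the branch vertices. -/
def IsSubdivisionIn {W : Type*} (F : W → W → Prop) (D : V → V → Prop)
    (branch : W → V) (P : W → W → List V) : Prop :=
  Function.Injective branch ∧
  (∀ u v : W, F u v →
    DipathFromTo D (P u v) (branch u) (branch v) ∧ 2 ≤ (P u v).length) ∧
  (∀ u v : W, F u v → ∀ x ∈ interiorL (P u v), ∀ w : W, x ≠ branch w) ∧
  (∀ u v u' v' : W, F u v → F u' v' → (u, v) ≠ (u', v') →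
    ∀ x ∈ interiorL (P u v), x ∉ interiorL (P u' v'))

/-- `D` contains a subdivision of `F`. -/
def ContainsSubdivision {W : Type*} (F : W → W → Prop) (D : V → V → Prop) : Prop :=
  ∃ (branch : W → V) (P : W → W → List V), IsSubdivisionIn F D branch P

/-- An `{x1,x2,x3}`-tripod: a directed cycle `C` together with three pairwise disjoint
dipaths `P1, P2, P3` starting at `x1, x2, x3` respectively and ending on `C`
(the paths may have length 0). -/
def IsTripod (D : V → V → Prop) (x1 x2 x3 : V) (C P1 P2 P3 : List V) : Prop :=
  IsDicycle D C ∧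
  IsDipath D P1 ∧ IsDipath D P2 ∧ IsDipath D P3 ∧
  P1.head? = some x1 ∧ P2.head? = some x2 ∧ P3.head? = some x3 ∧
  (∀ a ∈ P1.getLast?, a ∈ C) ∧ (∀ a ∈ P2.getLast?, a ∈ C) ∧ (∀ a ∈ P3.getLast?, a ∈ C) ∧
  (∀ z, z ∈ P1 → z ∉ P2) ∧ (∀ z, z ∈ P1 → z ∉ P3) ∧ (∀ z, z ∈ P2 → z ∉ P3)

/-- An unfolded tripod: each leg meets the cycle only in its terminal vertex and
meets `{x1,x2,x3}` only in its initial vertex. -/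
def IsUnfoldedTripod (D : V → V → Prop) (x1 x2 x3 : V) (C P1 P2 P3 : List V) : Prop :=
  IsTripod D x1 x2 x3 C P1 P2 P3 ∧
  (∀ z ∈ P1, z ∈ C → P1.getLast? = some z) ∧
  (∀ z ∈ P2, z ∈ C → P2.getLast? = some z) ∧
  (∀ z ∈ P3, z ∈ C → P3.getLast? = some z) ∧
  (∀ z ∈ P1, (z = x1 ∨ z = x2 ∨ z = x3) → P1.head? = some z) ∧
  (∀ z ∈ P2, (z = x1 ∨ z = x2 ∨ z = x3) → P2.head? = some z) ∧
  (∀ z ∈ P3, (z = x1 ∨ z = x2 ∨ z = x3) → P3.head? = some z)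

/-- The 3-wheel `W₃`: directed cycle `0 → 1 → 2 → 0` with centre `3` dominating all
cycle vertices. -/
def W3 : Fin 4 → Fin 4 → Prop := fun u v =>
  (u, v) ∈ ([(0, 1), (1, 2), (2, 0), (3, 0), (3, 1), (3, 2)] : List (Fin 4 × Fin 4))

/-!
Forward direction: the rim of a `W₃`-subdivision with centre `v` is a dicycle of `D - v`, so it
lies in one strong component `Γ` of `D - v`. Cutting each spoke at its first vertex `xᵢ` in `Γ`
gives an initial part outside `Γ`; these parts are independent `(v, X)`-dipaths. The rest of the
spoke runs in `D - v` from `xᵢ ∈ Γ` to the rim, hence stays in `Γ`, and with the rim it forms an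
`X`-tripod.

Backward direction: cut each leg of the tripod at its first vertex `yᵢ` on the cycle and prepend
the `(v, xᵢ)`-dipath. Since the `(v, X)`-dipaths meet `Γ` only in their ends, the three resulting
dipaths from `v` are independent, end at distinct cycle vertices `yᵢ` and meet the cycle only
there. Together with the three arcs into which the `yᵢ` cut the cycle they form a
`W₃`-subdivision with centre `v`.
-/

section Paths

variable {R D : V → V → Prop} {A B : Set V} {C P Q S l m l₁ l₂ : List V}
  {a b v w x y z y₁ y₂ y₃ : V}

theorem List.exists_eq_append_cons_first (p : V → Prop) (h : ∃ z ∈ l, p z) :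
    ∃ l₁ y l₂, l = l₁ ++ y :: l₂ ∧ p y ∧ ∀ z ∈ l₁, ¬ p z := by
  classical
  obtain ⟨y, hy⟩ := Option.isSome_iff_exists.mp
    (List.find?_isSome (p := fun z => decide (p z)).mpr (by simpa using h))
  obtain ⟨hpy, l₁, l₂, rfl, hl₁⟩ := List.find?_eq_some_iff_append.mp hy
  exact ⟨l₁, y, l₂, rfl, by simpa using hpy, fun z hz => by simpa using hl₁ z hz⟩

theorem List.IsChain.reflTransGen_of_mem (h : l.IsChain R) (hx : l.head? = some x)
    (hz : z ∈ l) : Relation.ReflTransGen R x z := by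
  obtain ⟨t, rfl⟩ := List.head?_eq_some_iff.mp hx
  exact h.induction (Relation.ReflTransGen R x ·) _ (fun _ _ h₁ h₂ => h₂.tail h₁)
    (fun _ => .refl) z hz

theorem List.IsChain.reflTransGen_getLast_of_mem (h : l.IsChain R) (hy : l.getLast? = some y)
    (hz : z ∈ l) : Relation.ReflTransGen R z y := by
  obtain ⟨t, rfl⟩ := List.getLast?_eq_some_iff.mp hy
  exact h.backwards_induction (Relation.ReflTransGen R · y) _ (fun _ _ h₁ h₂ => h₂.head h₁)
    (fun _ => by simp [Relation.ReflTransGen.refl]) z hz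

theorem List.IsChain.restrict_of_forall_mem (h : l.IsChain D) (hA : ∀ z ∈ l, z ∈ A) :
    l.IsChain (restrict D A) :=
  h.imp_of_mem_imp fun _ _ ha hb hab => ⟨hab, hA _ ha, hA _ hb⟩

theorem List.IsChain.of_restrict (h : l.IsChain (restrict D A)) : l.IsChain D :=
  h.imp fun _ _ hab => hab.1

theorem List.IsChain.mem_of_restrict (h : l.IsChain (restrict D A)) (hl : 2 ≤ l.length)
    (hz : z ∈ l) : z ∈ A := by
  obtain ⟨a, b, t, rfl⟩ : ∃ a b t, l = a :: b :: t := by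
    match l, hl with
    | a :: b :: t, _ => exact ⟨a, b, t, rfl⟩
  exact h.induction (· ∈ A) _ (fun _ _ hab _ => hab.2.2)
    (fun _ => (List.isChain_cons_cons.mp h).1.2.1) z hz

theorem List.IsChain.mem_of_restrict_of_mem (h : l.IsChain (restrict D A)) (ha : a ∈ l)
    (haA : a ∈ A) (hz : z ∈ l) : z ∈ A := by
  match l, h with
  | [_], _ => simp_all
  | _ :: _ :: _, h => exact h.mem_of_restrict (by simp) hz

theorem IsDipath.of_restrict (h : IsDipath (restrict D A) l) : IsDipath D l :=
  ⟨h.1, h.2.1.of_restrict, h.2.2⟩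

theorem IsDipath.restrict_of_forall_mem (h : IsDipath D l) (hA : ∀ z ∈ l, z ∈ A) :
    IsDipath (restrict D A) l :=
  ⟨h.1, h.2.1.restrict_of_forall_mem hA, h.2.2⟩

theorem IsDipath.restrict_mono (h : IsDipath (restrict D A) l) (hAB : A ⊆ B) :
    IsDipath (restrict D B) l :=
  ⟨h.1, h.2.1.imp fun _ _ hab => ⟨hab.1, hAB hab.2.1, hAB hab.2.2⟩, h.2.2⟩

theorem DipathFromTo.of_restrict (h : DipathFromTo (restrict D A) l x y) :
    DipathFromTo D l x y :=
  ⟨h.1.of_restrict, h.2⟩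

theorem DipathFromTo.restrict_mono (h : DipathFromTo (restrict D A) l x y) (hAB : A ⊆ B) :
    DipathFromTo (restrict D B) l x y :=
  ⟨h.1.restrict_mono hAB, h.2⟩

theorem eq_cons_interiorL_append (hx : l.head? = some x) (hy : l.getLast? = some y)
    (hl : 2 ≤ l.length) : l = x :: (interiorL l ++ [y]) := by
  obtain ⟨t, rfl⟩ := List.head?_eq_some_iff.mp hx
  have ht : t ≠ [] := by rintro rfl; simp at hl
  rw [List.getLast?_cons, List.getLast?_eq_some_getLast ht, Option.getD_some, Option.some_inj] at hy
  simp [interiorL, ← hy, List.dropLast_append_getLast ht]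

theorem DipathFromTo.two_le_length (h : DipathFromTo R l x y) (hxy : x ≠ y) :
    2 ≤ l.length := by
  obtain ⟨⟨hne, -, -⟩, hx, hy⟩ := h
  match l, hne with
  | [a], _ => simp_all
  | _ :: _ :: _, _ => simp

theorem mem_interiorL_or (hx : l.head? = some x) (hy : l.getLast? = some y) (hz : z ∈ l) :
    z ∈ interiorL l ∨ z = x ∨ z = y := by
  rcases Nat.lt_or_ge l.length 2 with hl | hl
  · match l, hl with
    | [a], _ => simp_all
  · rw [eq_cons_interiorL_append hx hy hl] at hz
    simp only [List.mem_cons, List.mem_append] at hz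
    tauto

theorem DipathFromTo.prefix (h : DipathFromTo R (l₁ ++ y :: l₂) x z) :
    DipathFromTo R (l₁ ++ [y]) x y := by
  have hpre : l₁ ++ [y] <+: l₁ ++ y :: l₂ := ⟨l₂, by simp⟩
  refine ⟨⟨by simp, h.1.2.1.prefix hpre, h.1.2.2.sublist hpre.sublist⟩, ?_, by simp⟩
  cases l₁ <;> simpa using h.2.1

theorem DipathFromTo.suffix (h : DipathFromTo R (l₁ ++ y :: l₂) x z) :
    DipathFromTo R (y :: l₂) y z :=
  ⟨⟨by simp, h.1.2.1.right_of_append, h.1.2.2.of_append_right⟩, rfl,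
    by simpa [List.getLast?_append] using h.2.2⟩

theorem DipathFromTo.append_tail (hl : DipathFromTo R l x y) (hm : DipathFromTo R m y z)
    (hlm : ∀ a ∈ l, a ∈ m → a = y) : DipathFromTo R (l ++ m.tail) x z := by
  obtain ⟨⟨hne, hlc, hln⟩, hlx, hly⟩ := hl
  obtain ⟨t, rfl⟩ := List.head?_eq_some_iff.mp hm.2.1
  obtain ⟨⟨-, hmc, hmn⟩, -, hmz⟩ := hm
  rw [List.nodup_cons] at hmn
  refine ⟨⟨by simp [hne], hlc.append hmc.tail ?_, ?_⟩, ?_, ?_⟩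
  · simp only [hly, Option.mem_def, Option.some_inj, forall_eq']
    exact hmc.rel_head?
  · refine List.nodup_append.mpr ⟨hln, hmn.2, fun a ha b hb hab => ?_⟩
    subst hab
    exact hmn.1 (hlm a ha (List.mem_cons_of_mem y hb) ▸ hb)
  · simp [List.head?_append, hlx]
  · cases t with
    | nil => simp_all
    | cons c s => simpa [List.getLast?_append] using hmz

theorem DipathFromTo.mem_and_ne_of_mem_interiorL (h : DipathFromTo R l x y)
    (hz : z ∈ interiorL l) : z ∈ l ∧ z ≠ x ∧ z ≠ y := by
  rcases Nat.lt_or_ge l.length 2 with hl | hl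
  · match l, hl with
    | [_], _ => simp [interiorL] at hz
  have hnd := h.1.2.2
  rw [eq_cons_interiorL_append h.2.1 h.2.2 hl] at hnd ⊢
  simp only [List.nodup_cons, List.nodup_append, List.mem_append, List.mem_singleton] at hnd
  refine ⟨by simp [hz], fun e => hnd.1 (.inl (e ▸ hz)), fun e => ?_⟩
  exact hnd.2.2.2 z hz y rfl e

theorem IsDipath.exists_prefix_first_mem {S : Set V} (hP : IsDipath D P)
    (hx : P.head? = some x) (hS : ∃ z ∈ P, z ∈ S) :
    ∃ y L, y ∈ S ∧ DipathFromTo D L x y ∧ L ⊆ P ∧ ∀ z ∈ L, z ∈ S → z = y := by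
  obtain ⟨L, y, L', rfl, hy, hL⟩ := List.exists_eq_append_cons_first (· ∈ S) hS
  refine ⟨y, L ++ [y], hy, DipathFromTo.prefix ⟨hP, hx, List.getLast?_eq_some_getLast (by simp)⟩,
    fun z hz => ?_, fun z hz hzS => ?_⟩
  · simp only [List.mem_append, List.mem_cons] at hz ⊢
    tauto
  · rcases List.mem_append.mp hz with h | h
    · exact absurd hzS (hL z h)
    · exact List.mem_singleton.mp h

theorem IsDicycle.of_restrict (h : IsDicycle (restrict D A) C) : IsDicycle D C :=
  ⟨h.1, h.2.1, h.2.2.1.of_restrict, h.2.2.2.imp fun _ ⟨ha, b, hb, hab⟩ => ⟨ha, b, hb, hab.1⟩⟩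

theorem IsDicycle.restrict_of_forall_mem (h : IsDicycle D C) (hA : ∀ z ∈ C, z ∈ A) :
    IsDicycle (restrict D A) C := by
  obtain ⟨hlen, hnd, hch, a, ha, b, hb, hab⟩ := h
  exact ⟨hlen, hnd, hch.restrict_of_forall_mem hA, a, ha, b, hb, hab,
    hA a (List.mem_of_getLast? ha), hA b (List.mem_of_head? hb)⟩

theorem isDicycle_of_isChain_append_head (hch : (C ++ [a]).IsChain R) (ha : C.head? = some a)
    (hnd : C.Nodup) (hlen : 2 ≤ C.length) : IsDicycle R C := by
  have hne : C ≠ [] := List.ne_nil_of_length_pos (by omega)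
  exact ⟨hlen, hnd, hch.left_of_append, C.getLast hne, List.getLast?_eq_some_getLast hne, a, ha,
    hch.rel_getLast_head_of_append hne (List.cons_ne_nil a [])⟩

theorem IsDicycle.rotate (h : IsDicycle R (l₁ ++ l₂)) : IsDicycle R (l₂ ++ l₁) := by
  rcases eq_or_ne l₁ [] with rfl | h₁
  · simpa using h
  rcases eq_or_ne l₂ [] with rfl | h₂
  · simpa using h
  obtain ⟨hlen, hnd, hch, a, ha, b, hb, hab⟩ := h
  replace hch := List.isChain_append.mp hch
  refine ⟨by simpa [add_comm] using hlen, List.nodup_append_comm.mp hnd,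
    hch.2.1.append hch.1 ?_, ?_⟩
  · rw [List.getLast?_append_of_ne_nil _ h₂] at ha
    rw [List.head?_append_of_ne_nil _ h₁] at hb
    intro x hx y hy
    rwa [Option.mem_unique hx ha, Option.mem_unique hy hb]
  · have hx := List.getLast?_eq_some_getLast h₁
    have hy := List.head?_eq_some_head h₂
    exact ⟨_, by rwa [List.getLast?_append_of_ne_nil _ h₁], _,
      by rwa [List.head?_append_of_ne_nil _ h₂], hch.2.2 _ hx _ hy⟩

theorem IsDicycle.dipathFromTo_arc (h : IsDicycle R (x :: (l₁ ++ y :: l₂))) :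
    DipathFromTo R (x :: (l₁ ++ [y])) x y :=
  DipathFromTo.prefix (l₁ := x :: l₁)
    ⟨⟨by simp, h.2.2.1, h.2.1⟩, rfl, List.getLast?_eq_some_getLast (by simp)⟩

theorem IsDicycle.reflTransGen (h : IsDicycle R C) (hx : x ∈ C) (hy : y ∈ C) :
    Relation.ReflTransGen R x y := by
  obtain ⟨-, -, hch, a, ha, b, hb, hab⟩ := h
  exact (hch.reflTransGen_getLast_of_mem ha hx).trans
    (.head hab (hch.reflTransGen_of_mem hb hy))

theorem IsDicycle.exists_three_arcs (h : IsDicycle R C) (h₁ : y₁ ∈ C) (h₂ : y₂ ∈ C)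
    (h₃ : y₃ ∈ C) (h₁₂ : y₁ ≠ y₂) (h₁₃ : y₁ ≠ y₃) (h₂₃ : y₂ ≠ y₃) :
    ∃ r₁ s₁ s₂, (C.Perm (y₁ :: r₁ ++ y₂ :: s₁ ++ y₃ :: s₂) ∧
        IsDicycle R (y₁ :: r₁ ++ y₂ :: s₁ ++ y₃ :: s₂)) ∨
      (C.Perm (y₁ :: r₁ ++ y₃ :: s₁ ++ y₂ :: s₂) ∧
        IsDicycle R (y₁ :: r₁ ++ y₃ :: s₁ ++ y₂ :: s₂)) := by
  obtain ⟨a, b, rfl⟩ := List.append_of_mem h₁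
  have hrot : IsDicycle R (y₁ :: (b ++ a)) := by simpa using h.rotate
  have hperm : (a ++ y₁ :: b).Perm (y₁ :: (b ++ a)) := by
    simpa using List.perm_append_comm (l₁ := a) (l₂ := y₁ :: b)
  have h₂' : y₂ ∈ b ++ a := by simp at h₂ ⊢; grind
  obtain ⟨c, d, hcd⟩ := List.append_of_mem h₂'
  have h₃' : y₃ ∈ c ∨ y₃ ∈ d := by
    have := hperm.subset h₃
    simp only [hcd, List.mem_cons, List.mem_append] at this
    grind
  rw [hcd] at hrot hperm
  rcases h₃' with h₃c | h₃d
  · obtain ⟨e, f, rfl⟩ := List.append_of_mem h₃c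
    exact ⟨e, f, d, .inr (by simpa using And.intro hperm hrot)⟩
  · obtain ⟨e, f, rfl⟩ := List.append_of_mem h₃d
    exact ⟨c, e, f, .inl (by simpa using And.intro hperm hrot)⟩

theorem isDicycle_append_interiorL (hQ : DipathFromTo R Q a b) (hP : DipathFromTo R P b a)
    (hab : a ≠ b) (hQP : ∀ z ∈ Q, z ∈ P → z = a ∨ z = b) : IsDicycle R (Q ++ interiorL P) := by
  have hQlen := hQ.two_le_length hab
  have hPeq := eq_cons_interiorL_append hP.2.1 hP.2.2 (hP.two_le_length hab.symm)
  obtain ⟨⟨-, hQc, hQn⟩, hQa, hQb⟩ := hQ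
  obtain ⟨⟨-, hPc, hPn⟩, -, -⟩ := hP
  rw [hPeq] at hPc hPn hQP
  have hwalk : (Q ++ interiorL P ++ [a]).IsChain R := by
    rw [List.append_assoc]
    refine hQc.append hPc.tail fun x hx y hy => ?_
    rw [hQb, Option.mem_def, Option.some_inj] at hx
    exact hx ▸ hPc.rel_head? hy
  refine isDicycle_of_isChain_append_head hwalk (by simp [List.head?_append, hQa]) ?_
    (by simp; omega)
  simp only [List.nodup_cons, List.nodup_append, List.mem_append, List.mem_singleton] at hPn
  refine List.nodup_append.mpr ⟨hQn, hPn.2.1, fun z hz w hw hzw => ?_⟩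
  subst hzw
  rcases hQP z hz (by simp [hw]) with rfl | rfl
  · exact hPn.2.2.2 z hw z rfl rfl
  · exact hPn.1 (.inl hw)

end Paths

def strongComponentIn (D : V → V → Prop) (A : Set V) (w : V) : Set V :=
  {z | ReachIn D A w z ∧ ReachIn D A z w}

section StrongComponent

variable {D : V → V → Prop} {A Γ : Set V} {C S l : List V} {b v w x y z : V}

theorem mem_strongComponentIn_of_reachIn (hx : x ∈ strongComponentIn D A w)
    (hy : y ∈ strongComponentIn D A w) (hxz : ReachIn D A x z) (hzy : ReachIn D A z y) :
    z ∈ strongComponentIn D A w :=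
  ⟨hx.1.trans hxz, hzy.trans hy.2⟩

theorem notMem_strongComponentIn (hv : v ∉ A) (hw : w ≠ v) : v ∉ strongComponentIn D A w := by
  rintro ⟨-, h⟩
  rcases h.cases_head with rfl | ⟨c, hvc, -⟩
  · exact hw rfl
  · exact hv hvc.2.1

theorem DipathFromTo.subset_strongComponentIn (hl : DipathFromTo (restrict D A) l x y)
    (hx : x ∈ strongComponentIn D A w) (hy : y ∈ strongComponentIn D A w) :
    ∀ z ∈ l, z ∈ strongComponentIn D A w := fun _ hz =>
  mem_strongComponentIn_of_reachIn hx hy (hl.1.2.1.reflTransGen_of_mem hl.2.1 hz)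
    (hl.1.2.1.reflTransGen_getLast_of_mem hl.2.2 hz)

theorem IsDicycle.subset_strongComponentIn (hC : IsDicycle (restrict D A) C) (hw : w ∈ C) :
    ∀ z ∈ C, z ∈ strongComponentIn D A w := fun _ hz =>
  ⟨hC.reflTransGen hw hz, hC.reflTransGen hz hw⟩

theorem DipathFromTo.exists_split_strongComponentIn (hS : DipathFromTo D S v b)
    (hΓ : Γ = strongComponentIn D {x | x ≠ v} w) (hb : b ∈ Γ) (hw : w ≠ v) :
    ∃ x T L, x ∈ Γ ∧ DipathFromTo (restrict D (Γᶜ ∪ {x})) T v x ∧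
      DipathFromTo (restrict D Γ) L x b ∧ T ⊆ S ∧ L ⊆ S := by
  subst hΓ
  have hvΓ := notMem_strongComponentIn (D := D) (A := {x | x ≠ v}) (fun h => h rfl) hw
  obtain ⟨T, x, L, rfl, hxΓ, hTΓ⟩ :=
    List.exists_eq_append_cons_first (· ∈ _) ⟨b, List.mem_of_getLast? hS.2.2, hb⟩
  have hT := hS.prefix
  have hL := hS.suffix
  have hvL : ∀ z ∈ x :: L, z ∈ {x | x ≠ v} := by
    have hvT : v ∈ T := by
      rcases List.mem_append.mp (List.mem_of_head? hT.2.1) with h | h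
      · exact h
      · exact absurd (List.mem_singleton.mp h ▸ hxΓ) hvΓ
    exact fun z hz hzv => (List.nodup_append.mp hS.1.2.2).2.2 v hvT z hz hzv.symm
  refine ⟨x, T ++ [x], x :: L, hxΓ, ⟨hT.1.restrict_of_forall_mem fun z hz => ?_, hT.2⟩,
    ⟨hL.1.restrict_of_forall_mem fun z hz => ?_, hL.2⟩, ?_, List.subset_append_right T _⟩
  · rcases List.mem_append.mp hz with h | h
    · exact .inl (hTΓ z h)
    · exact .inr (List.mem_singleton.mp h)
  · exact DipathFromTo.subset_strongComponentIn ⟨hL.1.restrict_of_forall_mem hvL, hL.2⟩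
      hxΓ hb z hz
  · intro z hz
    simp only [List.mem_append, List.mem_cons] at hz ⊢
    tauto

end StrongComponent

section Subdivision

variable {W : Type*} {F : W → W → Prop} {D : V → V → Prop} {branch : W → V}
  {P : W → W → List V}

theorem IsSubdivisionIn.eq_branch_of_mem_of_mem (hP : IsSubdivisionIn F D branch P)
    {u w u' w' : W} {z : V} (h : F u w) (h' : F u' w') (hne : (u, w) ≠ (u', w'))
    (hz : z ∈ P u w) (hz' : z ∈ P u' w') :
    ∃ t, z = branch t ∧ (t = u ∨ t = w) ∧ (t = u' ∨ t = w') := by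
  obtain ⟨hinj, harc, hint, hdisj⟩ := hP
  have hmem : ∀ {u w}, F u w → z ∈ P u w →
      z ∈ interiorL (P u w) ∨ ∃ t, z = branch t ∧ (t = u ∨ t = w) := fun h hz => by
    rcases mem_interiorL_or (harc _ _ h).1.2.1 (harc _ _ h).1.2.2 hz with hi | rfl | rfl
    · exact .inl hi
    · exact .inr ⟨_, rfl, .inl rfl⟩
    · exact .inr ⟨_, rfl, .inr rfl⟩
  rcases hmem h hz with hi | ⟨t, rfl, ht⟩ <;> rcases hmem h' hz' with hi' | ⟨t', he, ht'⟩
  · exact absurd hi' (hdisj _ _ _ _ h h' hne _ hi)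
  · exact absurd he (hint _ _ h _ hi t')
  · exact absurd rfl (hint _ _ h' _ hi' t)
  · exact ⟨t, rfl, ht, hinj he ▸ ht'⟩

theorem IsSubdivisionIn.eq_of_mem_of_mem (hP : IsSubdivisionIn F D branch P) (c : W)
    {u w u' w' : W} (h : F u w) (h' : F u' w') (hne : (u, w) ≠ (u', w'))
    (hc : ∀ t, t = u ∨ t = w → t = u' ∨ t = w' → t = c) :
    ∀ z ∈ P u w, z ∈ P u' w' → z = branch c := fun _ hz hz' => by
  obtain ⟨t, rfl, ht, ht'⟩ := hP.eq_branch_of_mem_of_mem h h' hne hz hz'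
  rw [hc t ht ht']

theorem IsSubdivisionIn.eq_or_eq_of_branch_mem (hP : IsSubdivisionIn F D branch P) {u w t : W}
    (h : F u w) (ht : branch t ∈ P u w) : t = u ∨ t = w := by
  rcases mem_interiorL_or (hP.2.1 u w h).1.2.1 (hP.2.1 u w h).1.2.2 ht with hi | e | e
  · exact absurd rfl (hP.2.2.1 u w h _ hi t)
  · exact .inl (hP.1 e)
  · exact .inr (hP.1 e)

theorem isSubdivisionIn_of_nodup (ws : List W) (arcs : List (W × W)) (hws : ∀ w, w ∈ ws)
    (hF : ∀ u w, F u w ↔ (u, w) ∈ arcs) (hirr : ∀ u, ¬ F u u)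
    (hP : ∀ e ∈ arcs, DipathFromTo D (P e.1 e.2) (branch e.1) (branch e.2))
    (hnd : (ws.map branch ++ arcs.flatMap fun e => interiorL (P e.1 e.2)).Nodup) :
    IsSubdivisionIn F D branch P := by
  obtain ⟨hb, hi, hbi⟩ := List.nodup_append.mp hnd
  have hinj : Function.Injective branch := fun a b hab =>
    List.inj_on_of_nodup_map hb (hws a) (hws b) hab
  refine ⟨hinj, fun u w h => ⟨hP _ ((hF u w).mp h), ?_⟩, ?_, ?_⟩
  · exact (hP _ ((hF u w).mp h)).two_le_length fun e => hirr u ((hinj e : u = w) ▸ h)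
  · intro u w h z hz t hzt
    exact hbi _ (List.mem_map_of_mem (hws t)) z (List.mem_flatMap.mpr ⟨_, (hF u w).mp h, hz⟩)
      hzt.symm
  · have hpw := (List.nodup_flatMap.mp hi).2
    have : Std.Symm (Function.onFun List.Disjoint fun e : W × W => interiorL (P e.1 e.2)) :=
      ⟨fun _ _ h => h.symm⟩
    exact fun u w u' w' h h' hne z hz hz' =>
      hpw.forall ((hF u w).mp h) ((hF u' w').mp h') hne hz hz'

end Subdivision

theorem Fin.pairwise_three {p : Fin 3 → Fin 3 → Prop} (hp : ∀ i j, p i j → p j i)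
    (h₀₁ : p 0 1) (h₀₂ : p 0 2) (h₁₂ : p 1 2) : Pairwise p := by
  intro i j hij
  fin_cases i <;> fin_cases j <;> first | exact absurd rfl hij | assumption | exact hp _ _ ‹_›

def IndependentDipaths {ι : Type*} (D : V → V → Prop) (v : V) (y : ι → V) (Q : ι → List V) :
    Prop :=
  (∀ i, DipathFromTo D (Q i) v (y i)) ∧ Pairwise fun i j => ∀ z ∈ Q i, z ∈ Q j → z = v

section Wheel

variable {ι : Type*} {D : V → V → Prop} {Γ : Set V}
  {C P₁ P₂ P₃ Q₁ Q₂ Q₃ T₁ T₂ T₃ r₁ s₁ s₂ : List V} {v x₁ x₂ x₃ y₁ y₂ y₃ : V}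

theorem nodup_append_cons_interiorL (hC : C.Nodup) (hv : v ∉ C)
    (hQ₁ : DipathFromTo D Q₁ v y₁) (hQ₂ : DipathFromTo D Q₂ v y₂)
    (hQ₃ : DipathFromTo D Q₃ v y₃) (h₁₂ : ∀ z ∈ Q₁, z ∈ Q₂ → z = v)
    (h₁₃ : ∀ z ∈ Q₁, z ∈ Q₃ → z = v) (h₂₃ : ∀ z ∈ Q₂, z ∈ Q₃ → z = v)
    (hC₁ : ∀ z ∈ Q₁, z ∈ C → z = y₁) (hC₂ : ∀ z ∈ Q₂, z ∈ C → z = y₂)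
    (hC₃ : ∀ z ∈ Q₃, z ∈ C → z = y₃) :
    (C ++ v :: (interiorL Q₁ ++ interiorL Q₂ ++ interiorL Q₃)).Nodup := by
  have hI : ∀ {Q y}, DipathFromTo D Q v y → (∀ z ∈ Q, z ∈ C → z = y) →
      ∀ z ∈ interiorL Q, z ∈ Q ∧ z ≠ v ∧ z ∉ C := fun hQ hQC z hz =>
    have h := hQ.mem_and_ne_of_mem_interiorL hz
    ⟨h.1, h.2.1, fun hzC => h.2.2 (hQC z h.1 hzC)⟩
  have hnd : ∀ {Q y}, DipathFromTo D Q v y → (interiorL Q).Nodup := fun hQ =>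
    hQ.1.2.2.sublist ((List.dropLast_sublist _).trans (List.tail_sublist _))
  have i₁ := hI hQ₁ hC₁
  have i₂ := hI hQ₂ hC₂
  have i₃ := hI hQ₃ hC₃
  have n₁ := hnd hQ₁
  have n₂ := hnd hQ₂
  have n₃ := hnd hQ₃
  simp only [List.nodup_append, List.nodup_cons, List.mem_append, List.mem_cons] at *
  grind

theorem exists_W3_subdivision_of_arcs (hC : IsDicycle D (y₁ :: r₁ ++ y₂ :: s₁ ++ y₃ :: s₂))
    (hperm : C.Perm (y₁ :: r₁ ++ y₂ :: s₁ ++ y₃ :: s₂)) (hv : v ∉ C)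
    (hQ₁ : DipathFromTo D Q₁ v y₁) (hQ₂ : DipathFromTo D Q₂ v y₂)
    (hQ₃ : DipathFromTo D Q₃ v y₃) (h₁₂ : ∀ z ∈ Q₁, z ∈ Q₂ → z = v)
    (h₁₃ : ∀ z ∈ Q₁, z ∈ Q₃ → z = v) (h₂₃ : ∀ z ∈ Q₂, z ∈ Q₃ → z = v)
    (hC₁ : ∀ z ∈ Q₁, z ∈ C → z = y₁) (hC₂ : ∀ z ∈ Q₂, z ∈ C → z = y₂)
    (hC₃ : ∀ z ∈ Q₃, z ∈ C → z = y₃) :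
    ∃ branch P, IsSubdivisionIn W3 D branch P ∧ branch 3 = v := by
  refine ⟨![y₁, y₂, y₃, v], fun u w => if u = 3 then ![Q₁, Q₂, Q₃, []] w
    else ![y₁ :: r₁ ++ [y₂], y₂ :: s₁ ++ [y₃], y₃ :: s₂ ++ [y₁], []] u,
    isSubdivisionIn_of_nodup [0, 1, 2, 3] [(0, 1), (1, 2), (2, 0), (3, 0), (3, 1), (3, 2)]
      (by decide) (fun _ _ => Iff.rfl) (by unfold W3; decide) ?_ ?_, rfl⟩
  · have c₁ : IsDicycle D (y₁ :: (r₁ ++ y₂ :: (s₁ ++ y₃ :: s₂))) := by simpa using hC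
    have c₂ : IsDicycle D (y₂ :: (s₁ ++ y₃ :: (s₂ ++ y₁ :: r₁))) := by
      have := IsDicycle.rotate (l₁ := y₁ :: r₁) (l₂ := y₂ :: s₁ ++ y₃ :: s₂) (by simpa using hC)
      simpa using this
    have c₃ : IsDicycle D (y₃ :: (s₂ ++ y₁ :: (r₁ ++ y₂ :: s₁))) := by simpa using hC.rotate
    simpa using ⟨c₁.dipathFromTo_arc, c₂.dipathFromTo_arc, c₃.dipathFromTo_arc, hQ₁, hQ₂, hQ₃⟩
  · have key := (hperm.append_right _).nodup_iff.mp <| nodup_append_cons_interiorL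
      (hperm.nodup_iff.mpr hC.2.1) hv hQ₁ hQ₂ hQ₃ h₁₂ h₁₃ h₂₃ hC₁ hC₂ hC₃
    classical
    refine (List.Perm.nodup_iff (List.perm_iff_count.mpr fun a => ?_)).mp key
    simp [interiorL, List.count_cons, List.count_append]
    omega

theorem exists_W3_subdivision_of_dicycle {y : Fin 3 → V} {Q : Fin 3 → List V}
    (hC : IsDicycle D C) (hv : v ∉ C) (hQ : IndependentDipaths D v y Q) (hy : ∀ i, y i ∈ C)
    (hQC : ∀ i, ∀ z ∈ Q i, z ∈ C → z = y i) :
    ∃ branch P, IsSubdivisionIn W3 D branch P ∧ branch 3 = v := by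
  have hne : ∀ i j, i ≠ j → y i ≠ y j := fun i j hij e =>
    hv (hQ.2 hij _ (List.mem_of_getLast? (hQ.1 i).2.2) (e ▸ List.mem_of_getLast? (hQ.1 j).2.2)
      ▸ hy i)
  obtain ⟨r₁, s₁, s₂, ⟨hperm, hC'⟩ | ⟨hperm, hC'⟩⟩ := hC.exists_three_arcs (hy 0) (hy 1) (hy 2)
    (hne 0 1 (by decide)) (hne 0 2 (by decide)) (hne 1 2 (by decide))
  · exact exists_W3_subdivision_of_arcs hC' hperm hv (hQ.1 0) (hQ.1 1) (hQ.1 2)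
      (hQ.2 (by decide)) (hQ.2 (by decide)) (hQ.2 (by decide)) (hQC 0) (hQC 1) (hQC 2)
  · exact exists_W3_subdivision_of_arcs hC' hperm hv (hQ.1 0) (hQ.1 2) (hQ.1 1)
      (hQ.2 (by decide)) (hQ.2 (by decide)) (hQ.2 (by decide)) (hQC 0) (hQC 2) (hQC 1)

theorem IndependentDipaths.eq_of_mem_of_mem {x : ι → V} {T : ι → List V}
    (hT : IndependentDipaths (restrict D (Γᶜ ∪ Set.range x)) v x T) (hvΓ : v ∉ Γ) {i : ι}
    {z : V} (hz : z ∈ T i) (hzΓ : z ∈ Γ) : z = x i := by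
  obtain ⟨j, rfl⟩ := ((hT.1 i).1.2.1.mem_of_restrict_of_mem (List.mem_of_head? (hT.1 i).2.1)
    (.inl hvΓ) hz).resolve_left (· hzΓ)
  rcases eq_or_ne j i with rfl | hji
  · rfl
  · exact absurd (hT.2 hji.symm _ hz (List.mem_of_getLast? (hT.1 j).2.2) ▸ hzΓ) hvΓ

theorem exists_independentDipaths_to_dicycle {x : ι → V} {T P : ι → List V} (hvΓ : v ∉ Γ)
    (hT : IndependentDipaths (restrict D (Γᶜ ∪ Set.range x)) v x T)
    (hC : IsDicycle (restrict D Γ) C)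
    (hP : ∀ i, IsDipath (restrict D Γ) (P i) ∧ (P i).head? = some (x i) ∧
      ∀ a ∈ (P i).getLast?, a ∈ C)
    (hPP : Pairwise fun i j => ∀ z ∈ P i, z ∉ P j) :
    ∃ (y : ι → V) (Q : ι → List V), IndependentDipaths D v y Q ∧ (∀ i, y i ∈ C) ∧
      ∀ i, ∀ z ∈ Q i, z ∈ C → z = y i := by
  have hCΓ : ∀ z ∈ C, z ∈ Γ := fun z hz => hC.2.2.1.mem_of_restrict hC.1 hz
  have hleg : ∀ i, ∃ y L, y ∈ C ∧ DipathFromTo (restrict D Γ) L (x i) y ∧ L ⊆ P i ∧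
      ∀ z ∈ L, z ∈ C → z = y := fun i => by
    obtain ⟨a, ha⟩ := Option.isSome_iff_exists.mp (List.getLast?_isSome.mpr (hP i).1.1)
    exact (hP i).1.exists_prefix_first_mem (hP i).2.1
      ⟨a, List.mem_of_getLast? ha, (hP i).2.2 a ha⟩
  choose y L hyC hL hLP hLC using hleg
  have hxL : ∀ i, x i ∈ L i := fun i => List.mem_of_head? (hL i).2.1
  have hLΓ : ∀ i, ∀ z ∈ L i, z ∈ Γ := fun i z hz =>
    (hL i).1.2.1.mem_of_restrict_of_mem (List.mem_of_getLast? (hL i).2.2) (hCΓ _ (hyC i)) hz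
  have hTΓ : ∀ i, ∀ z ∈ T i, z ∈ Γ → z = x i := fun _ _ hz hzΓ =>
    hT.eq_of_mem_of_mem hvΓ hz hzΓ
  have hmem : ∀ i, ∀ z ∈ T i ++ (L i).tail, z ∈ T i ∨ z ∈ L i := fun i z hz =>
    (List.mem_append.mp hz).imp id List.mem_of_mem_tail
  refine ⟨y, fun i => T i ++ (L i).tail, ⟨fun i => ?_, fun i j hij z hz hz' => ?_⟩, hyC,
    fun i z hz hzC => ?_⟩
  · exact (hT.1 i).of_restrict.append_tail (hL i).of_restrict fun z hz hz' =>
      hTΓ i z hz (hLΓ i z hz')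
  · rcases hmem i z hz with h | h <;> rcases hmem j z hz' with h' | h'
    · exact hT.2 hij z h h'
    · exact absurd (hLP j h') (hPP hij z (hLP i (hTΓ i z h (hLΓ j z h') ▸ hxL i)))
    · exact absurd (hLP j (hTΓ j z h' (hLΓ i z h) ▸ hxL j)) (hPP hij z (hLP i h))
    · exact absurd (hLP j h') (hPP hij z (hLP i h))
  · rcases hmem i z hz with h | h
    · exact hLC i z (hTΓ i z h (hCΓ z hzC) ▸ hxL i) hzC
    · exact hLC i z h hzC

theorem exists_W3_subdivision_of_tripod (hvΓ : v ∉ Γ)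
    (hT₁ : DipathFromTo (restrict D ({z | z ∉ Γ} ∪ {x₁, x₂, x₃})) T₁ v x₁)
    (hT₂ : DipathFromTo (restrict D ({z | z ∉ Γ} ∪ {x₁, x₂, x₃})) T₂ v x₂)
    (hT₃ : DipathFromTo (restrict D ({z | z ∉ Γ} ∪ {x₁, x₂, x₃})) T₃ v x₃)
    (h₁₂ : ∀ z ∈ T₁, z ∈ T₂ → z = v) (h₁₃ : ∀ z ∈ T₁, z ∈ T₃ → z = v)
    (h₂₃ : ∀ z ∈ T₂, z ∈ T₃ → z = v) (htri : IsTripod (restrict D Γ) x₁ x₂ x₃ C P₁ P₂ P₃) :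
    ∃ branch P, IsSubdivisionIn W3 D branch P ∧ branch 3 = v := by
  obtain ⟨hC, hP₁, hP₂, hP₃, hx₁, hx₂, hx₃, hl₁, hl₂, hl₃, d₁₂, d₁₃, d₂₃⟩ := htri
  have hX : ({x₁, x₂, x₃} : Set V) = Set.range ![x₁, x₂, x₃] := by
    rw [Matrix.range_cons, Matrix.range_cons, Matrix.range_cons_empty]
    rfl
  rw [hX] at hT₁ hT₂ hT₃
  obtain ⟨y, Q, hQ, hyC, hQC⟩ := exists_independentDipaths_to_dicycle (T := ![T₁, T₂, T₃])
    (P := ![P₁, P₂, P₃]) hvΓ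
    ⟨fun i => by fin_cases i; exacts [hT₁, hT₂, hT₃],
      Fin.pairwise_three (fun _ _ h z hi hj => h z hj hi) h₁₂ h₁₃ h₂₃⟩ hC
    (fun i => by fin_cases i; exacts [⟨hP₁, hx₁, hl₁⟩, ⟨hP₂, hx₂, hl₂⟩, ⟨hP₃, hx₃, hl₃⟩])
    (Fin.pairwise_three (fun _ _ h z hj hi => h z hi hj) d₁₂ d₁₃ d₂₃)
  exact exists_W3_subdivision_of_dicycle hC.of_restrict
    (fun h => hvΓ (hC.2.2.1.mem_of_restrict hC.1 h)) hQ hyC hQC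

end Wheel

section WheelSubdivision

variable {D : V → V → Prop} {Γ : Set V} {branch : Fin 4 → V} {P : Fin 4 → Fin 4 → List V}

theorem W3_three_iff {i : Fin 4} : W3 3 i ↔ i ≠ 3 := by
  fin_cases i <;> simp [W3]

theorem IsSubdivisionIn.W3_spoke (hP : IsSubdivisionIn W3 D branch P) {i : Fin 4} (hi : i ≠ 3) :
    DipathFromTo D (P 3 i) (branch 3) (branch i) :=
  (hP.2.1 3 i (W3_three_iff.mpr hi)).1

theorem IsSubdivisionIn.W3_spokes_meet (hP : IsSubdivisionIn W3 D branch P) {i j : Fin 4}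
    (hi : i ≠ 3) (hj : j ≠ 3) (hij : i ≠ j) : ∀ z ∈ P 3 i, z ∈ P 3 j → z = branch 3 :=
  hP.eq_of_mem_of_mem 3 (W3_three_iff.mpr hi) (W3_three_iff.mpr hj) (by simpa using hij)
    (by omega)

theorem IsSubdivisionIn.exists_W3_rim (hP : IsSubdivisionIn W3 D branch P) :
    ∃ C, IsDicycle (restrict D {x | x ≠ branch 3}) C ∧ branch 0 ∈ C ∧ branch 1 ∈ C ∧
      branch 2 ∈ C := by
  have harc : ∀ {u w}, W3 u w → DipathFromTo D (P u w) (branch u) (branch w) :=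
    fun h => (hP.2.1 _ _ h).1
  have w₀₁ : W3 0 1 := by simp [W3]
  have w₁₂ : W3 1 2 := by simp [W3]
  have w₂₀ : W3 2 0 := by simp [W3]
  have hQ := (harc w₀₁).append_tail (harc w₁₂)
    (hP.eq_of_mem_of_mem 1 w₀₁ w₁₂ (by decide) (by omega))
  have hC := isDicycle_append_interiorL hQ (harc w₂₀) (hP.1.ne (by decide)) fun z hz hz' => by
    rcases List.mem_append.mp hz with h | h
    · exact .inl (hP.eq_of_mem_of_mem 0 w₀₁ w₂₀ (by decide) (by omega) z h hz')
    · exact .inr (hP.eq_of_mem_of_mem 2 w₁₂ w₂₀ (by decide) (by omega) z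
        (List.mem_of_mem_tail h) hz')
  refine ⟨_, hC.restrict_of_forall_mem fun z hz hz₃ => ?_,
    List.mem_append_left _ (List.mem_of_head? hQ.2.1),
    List.mem_append_left _ (List.mem_append_left _ (List.mem_of_getLast? (harc w₀₁).2.2)),
    List.mem_append_left _ (List.mem_of_getLast? hQ.2.2)⟩
  · subst hz₃
    simp only [List.mem_append] at hz
    rcases hz with (h | h) | h
    · have := hP.eq_or_eq_of_branch_mem w₀₁ h
      omega
    · have := hP.eq_or_eq_of_branch_mem w₁₂ (List.mem_of_mem_tail h)
      omega
    · have := hP.eq_or_eq_of_branch_mem w₂₀ ((harc w₂₀).mem_and_ne_of_mem_interiorL h).1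
      omega

theorem IsSubdivisionIn.exists_tripod (hP : IsSubdivisionIn W3 D branch P)
    (hΓ : Γ = strongComponentIn D {x | x ≠ branch 3} (branch 0)) :
    ∃ x₁ x₂ x₃ : V, x₁ ≠ x₂ ∧ x₁ ≠ x₃ ∧ x₂ ≠ x₃ ∧ x₁ ∈ Γ ∧ x₂ ∈ Γ ∧ x₃ ∈ Γ ∧
      (∃ T₁ T₂ T₃ : List V,
        DipathFromTo (restrict D ({z | z ∉ Γ} ∪ {x₁, x₂, x₃})) T₁ (branch 3) x₁ ∧
        DipathFromTo (restrict D ({z | z ∉ Γ} ∪ {x₁, x₂, x₃})) T₂ (branch 3) x₂ ∧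
        DipathFromTo (restrict D ({z | z ∉ Γ} ∪ {x₁, x₂, x₃})) T₃ (branch 3) x₃ ∧
        (∀ z ∈ T₁, z ∈ T₂ → z = branch 3) ∧ (∀ z ∈ T₁, z ∈ T₃ → z = branch 3) ∧
        (∀ z ∈ T₂, z ∈ T₃ → z = branch 3)) ∧
      ∃ C P₁ P₂ P₃ : List V, IsTripod (restrict D Γ) x₁ x₂ x₃ C P₁ P₂ P₃ := by
  have hw : branch 0 ≠ branch 3 := hP.1.ne (by decide)
  have hvΓ : branch 3 ∉ Γ := hΓ ▸ notMem_strongComponentIn (fun h => h rfl) hw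
  obtain ⟨C, hC, h₀, h₁, h₂⟩ := hP.exists_W3_rim
  have hCΓ : ∀ z ∈ C, z ∈ Γ := hΓ ▸ hC.subset_strongComponentIn h₀
  obtain ⟨x₁, T₁, L₁, hx₁, hT₁, hL₁, hT₁S, hL₁S⟩ :=
    (hP.W3_spoke (i := 0) (by decide)).exists_split_strongComponentIn hΓ (hCΓ _ h₀) hw
  obtain ⟨x₂, T₂, L₂, hx₂, hT₂, hL₂, hT₂S, hL₂S⟩ :=
    (hP.W3_spoke (i := 1) (by decide)).exists_split_strongComponentIn hΓ (hCΓ _ h₁) hw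
  obtain ⟨x₃, T₃, L₃, hx₃, hT₃, hL₃, hT₃S, hL₃S⟩ :=
    (hP.W3_spoke (i := 2) (by decide)).exists_split_strongComponentIn hΓ (hCΓ _ h₂) hw
  have s₁₂ := hP.W3_spokes_meet (i := 0) (j := 1) (by decide) (by decide) (by decide)
  have s₁₃ := hP.W3_spokes_meet (i := 0) (j := 2) (by decide) (by decide) (by decide)
  have s₂₃ := hP.W3_spokes_meet (i := 1) (j := 2) (by decide) (by decide) (by decide)
  have hLΓ : ∀ {L x y}, DipathFromTo (restrict D Γ) L x y → x ∈ Γ → ∀ z ∈ L, z ∈ Γ :=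
    fun hL hx _ hz => hL.1.2.1.mem_of_restrict_of_mem (List.mem_of_head? hL.2.1) hx hz
  have hxT : ∀ {T x}, DipathFromTo (restrict D (Γᶜ ∪ {x})) T (branch 3) x → x ∈ T :=
    fun hT => List.mem_of_getLast? hT.2.2
  have hlast : ∀ {L x y}, DipathFromTo (restrict D Γ) L x y → y ∈ C → ∀ a ∈ L.getLast?, a ∈ C :=
    fun hL hy a ha => Option.mem_unique ha hL.2.2 ▸ hy
  refine ⟨x₁, x₂, x₃, fun e => ?_, fun e => ?_, fun e => ?_, hx₁, hx₂, hx₃,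
    ⟨T₁, T₂, T₃, hT₁.restrict_mono (Set.union_subset_union_right _ (by simp)),
      hT₂.restrict_mono (Set.union_subset_union_right _ (by simp)),
      hT₃.restrict_mono (Set.union_subset_union_right _ (by simp)),
      fun z h h' => s₁₂ z (hT₁S h) (hT₂S h'), fun z h h' => s₁₃ z (hT₁S h) (hT₃S h'),
      fun z h h' => s₂₃ z (hT₂S h) (hT₃S h')⟩,
    C, L₁, L₂, L₃, hC.of_restrict.restrict_of_forall_mem hCΓ, hL₁.1, hL₂.1, hL₃.1,
    hL₁.2.1, hL₂.2.1, hL₃.2.1, hlast hL₁ h₀, hlast hL₂ h₁, hlast hL₃ h₂,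
    fun z h h' => hvΓ (s₁₂ z (hL₁S h) (hL₂S h') ▸ hLΓ hL₁ hx₁ z h),
    fun z h h' => hvΓ (s₁₃ z (hL₁S h) (hL₃S h') ▸ hLΓ hL₁ hx₁ z h),
    fun z h h' => hvΓ (s₂₃ z (hL₂S h) (hL₃S h') ▸ hLΓ hL₂ hx₂ z h)⟩
  · exact hvΓ (s₁₂ x₁ (hT₁S (hxT hT₁)) (e ▸ hT₂S (hxT hT₂)) ▸ hx₁)
  · exact hvΓ (s₁₃ x₁ (hT₁S (hxT hT₁)) (e ▸ hT₃S (hxT hT₃)) ▸ hx₁)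
  · exact hvΓ (s₂₃ x₂ (hT₂S (hxT hT₂)) (e ▸ hT₃S (hxT hT₃)) ▸ hx₂)

end WheelSubdivision

theorem W3_centre_characterization (D : V → V → Prop) (v : V) :
    (∃ branch P, IsSubdivisionIn W3 D branch P ∧ branch 3 = v) ↔
    ∃ (Γ : Set V) (w : V), w ≠ v ∧ w ∈ Γ ∧
      Γ = {z | ReachIn D {x | x ≠ v} w z ∧ ReachIn D {x | x ≠ v} z w} ∧
      ∃ x1 x2 x3 : V, x1 ≠ x2 ∧ x1 ≠ x3 ∧ x2 ≠ x3 ∧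
        x1 ∈ Γ ∧ x2 ∈ Γ ∧ x3 ∈ Γ ∧
        (∃ T1 T2 T3 : List V,
          DipathFromTo (restrict D ({z | z ∉ Γ} ∪ {x1, x2, x3})) T1 v x1 ∧
          DipathFromTo (restrict D ({z | z ∉ Γ} ∪ {x1, x2, x3})) T2 v x2 ∧
          DipathFromTo (restrict D ({z | z ∉ Γ} ∪ {x1, x2, x3})) T3 v x3 ∧
          (∀ z, z ∈ T1 → z ∈ T2 → z = v) ∧
          (∀ z, z ∈ T1 → z ∈ T3 → z = v) ∧
          (∀ z, z ∈ T2 → z ∈ T3 → z = v)) ∧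
        (∃ C P1 P2 P3 : List V, IsTripod (restrict D Γ) x1 x2 x3 C P1 P2 P3) := by
  constructor
  · rintro ⟨branch, P, hP, rfl⟩
    exact ⟨strongComponentIn D {x | x ≠ branch 3} (branch 0), branch 0, hP.1.ne (by decide),
      ⟨.refl, .refl⟩, rfl, hP.exists_tripod rfl⟩
  · rintro ⟨Γ, w, hwv, -, rfl, x₁, x₂, x₃, -, -, -, -, -, -,
      ⟨T₁, T₂, T₃, hT₁, hT₂, hT₃, h₁₂, h₁₃, h₂₃⟩, C, P₁, P₂, P₃, htri⟩
    have hvΓ : v ∉ strongComponentIn D {x | x ≠ v} w :=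
      notMem_strongComponentIn (fun h => h rfl) hwv
    exact exists_W3_subdivision_of_tripod hvΓ hT₁ hT₂ hT₃ h₁₂ h₁₃ h₂₃ htri
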